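/- arXiv:math/0303222 — 4 statements merged into one kernel-verified Lean document; each statement's English description precedes it below -/
import Mathlib

section
/- For every integer p ≥ 2, the number of subsets I of the set of long positive roots {e_i − e_j, e_i + e_j : 1 ≤ i < j ≤ p} of the root system B_p that are combinatorial abelian ideals equals 2^(p−1). -/
/-- The `i`-th standard basis vector of `ℝ^p`. -/
noncomputable def e {p : ℕ} (i : Fin p) : Fin p → ℝ := fun j => if j = i then 1 else 0

/-- The positive roots of the root system `B_p`. -/
def PosB (p : ℕ) : Set (Fin p → ℝ) :=
  {v | (∃ i j : Fin p, i < j ∧ (v = e i - e j ∨ v = e i + e j)) ∨ (∃ i : Fin p, v = e i)}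

/-- All roots of `B_p`. -/
def DeltaB (p : ℕ) : Set (Fin p → ℝ) := PosB p ∪ {v | -v ∈ PosB p}

/-- The long positive roots of `B_p`. -/
def LongPosB (p : ℕ) : Set (Fin p → ℝ) :=
  {v | ∃ i j : Fin p, i < j ∧ (v = e i - e j ∨ v = e i + e j)}

/-- `I` is a combinatorial abelian ideal with respect to the root system `Δ`
with positive system `Δ⁺`. -/
def IsAbelianIdeal {V : Type*} [Add V] (Δ Δp : Set V) (I : Set V) : Prop :=
  I ⊆ Δp ∧ (∀ μ ∈ I, ∀ ν ∈ I, μ + ν ∉ Δ) ∧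
    (∀ γ ∈ I, ∀ ν ∈ Δp, γ + ν ∈ Δ → γ + ν ∈ I)


attribute [local instance] Classical.propDecidable

set_option linter.unusedVariables false

/-- Down-closed sets of pairs `(i,j)` with `i < j < p`. -/
def DC (p : ℕ) (T : Finset (ℕ × ℕ)) : Prop :=
  (∀ q ∈ T, q.1 < q.2 ∧ q.2 < p) ∧
  (∀ q ∈ T, ∀ a b : ℕ, a < b → a ≤ q.1 → b ≤ q.2 → (a, b) ∈ T)

/-- shift down: remove row 0 and shift. -/
noncomputable def shiftD (T : Finset (ℕ × ℕ)) : Finset (ℕ × ℕ) :=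
  (T.filter (fun q => 1 ≤ q.1)).image (fun q => (q.1 - 1, q.2 - 1))

noncomputable def shiftU (p : ℕ) (T : Finset (ℕ × ℕ)) : Finset (ℕ × ℕ) :=
  (T.image (fun q => (q.1 + 1, q.2 + 1))) ∪ ((Finset.Icc 1 p).image (fun j => (0, j)))

lemma mem_shiftD {p : ℕ} {T : Finset (ℕ × ℕ)} (hT : DC p T) (a b : ℕ) :
    (a, b) ∈ shiftD T ↔ (a + 1, b + 1) ∈ T := by
  simp only [shiftD, Finset.mem_image, Finset.mem_filter]
  constructor
  · rintro ⟨⟨x, y⟩, ⟨hx, h1⟩, heq⟩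
    have hy : 1 ≤ y := le_trans h1 (le_of_lt (hT.1 _ hx).1)
    simp only [Prod.mk.injEq] at heq
    obtain ⟨ha, hb⟩ := heq
    have : x = a + 1 := by omega
    have : y = b + 1 := by omega
    subst this; subst ‹x = a + 1›; exact hx
  · intro h
    exact ⟨(a + 1, b + 1), ⟨h, by omega⟩, by simp⟩

lemma mem_shiftU {p : ℕ} {T : Finset (ℕ × ℕ)} (a b : ℕ) :
    (a, b) ∈ shiftU p T ↔ (a = 0 ∧ 1 ≤ b ∧ b ≤ p) ∨ (1 ≤ a ∧ 1 ≤ b ∧ (a - 1, b - 1) ∈ T) := by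
  simp only [shiftU, Finset.mem_union, Finset.mem_image, Finset.mem_Icc, Prod.mk.injEq]
  constructor
  · rintro (⟨⟨x, y⟩, hx, h1, h2⟩ | ⟨j, hj, h1, h2⟩)
    · right; constructor; omega; constructor; omega
      have : x = a - 1 := by omega
      have : y = b - 1 := by omega
      subst this; subst ‹x = a - 1›; exact hx
    · left; omega
  · rintro (⟨h0, h1, h2⟩ | ⟨h1, h2, h3⟩)
    · right; exact ⟨b, ⟨h1, h2⟩, by omega, rfl⟩
    · left; exact ⟨(a - 1, b - 1), h3, by omega, by omega⟩

lemma DC_shiftD {p : ℕ} {T : Finset (ℕ × ℕ)} (hT : DC (p + 1) T) : DC p (shiftD T) := by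
  constructor
  · rintro ⟨a, b⟩ h
    rw [mem_shiftD hT] at h
    have := (hT.1 _ h)
    simp at this ⊢; omega
  · rintro ⟨i, j⟩ h a b hab hai hbj
    rw [mem_shiftD hT] at h ⊢
    exact hT.2 _ h (a + 1) (b + 1) (by omega) (by simpa using Nat.add_le_add_right hai 1)
      (by simpa using Nat.add_le_add_right hbj 1)

lemma DC_shiftU {p : ℕ} {T : Finset (ℕ × ℕ)} (hp : 1 ≤ p) (hT : DC p T) :
    DC (p + 1) (shiftU p T) := by
  constructor
  · rintro ⟨a, b⟩ h
    rw [mem_shiftU] at h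
    rcases h with ⟨h0, h1, h2⟩ | ⟨h1, h2, h3⟩
    · simp; omega
    · have := hT.1 _ h3; simp at this ⊢; omega
  · rintro ⟨i, j⟩ h a b hab hai hbj
    rw [mem_shiftU] at h ⊢
    rcases Nat.eq_zero_or_pos a with ha | ha
    · left
      rcases h with ⟨h0, h1, h2⟩ | ⟨h1, h2, h3⟩
      · omega
      · have := hT.1 _ h3; omega
    · right
      rcases h with ⟨h0, h1, h2⟩ | ⟨h1, h2, h3⟩
      · omega
      · refine ⟨ha, by omega, ?_⟩
        exact hT.2 _ h3 (a - 1) (b - 1) (by omega) (by omega) (by omega)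

lemma DC_of_not_top {p : ℕ} {T : Finset (ℕ × ℕ)} (hp : 1 ≤ p) (hT : DC (p + 1) T)
    (h : (0, p) ∉ T) : DC p T := by
  refine ⟨?_, hT.2⟩
  rintro ⟨a, b⟩ hq
  have h1 := hT.1 _ hq
  simp only at h1
  refine ⟨h1.1, ?_⟩
  by_contra hb
  have hbp : b = p := by omega
  exact h (hT.2 _ hq 0 p (by omega) (by omega) (by omega))

lemma DC_mono {p : ℕ} {T : Finset (ℕ × ℕ)} (hT : DC p T) : DC (p + 1) T :=
  ⟨fun q hq => ⟨(hT.1 q hq).1, Nat.lt_succ_of_lt (hT.1 q hq).2⟩, hT.2⟩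

noncomputable def stepEquiv (p : ℕ) (hp : 1 ≤ p) :
    {T : Finset (ℕ × ℕ) // DC (p + 1) T} ≃ Bool × {T : Finset (ℕ × ℕ) // DC p T} where
  toFun := fun ⟨T, hT⟩ =>
    if h : (0, p) ∈ T then (true, ⟨shiftD T, DC_shiftD hT⟩)
    else (false, ⟨T, DC_of_not_top hp hT h⟩)
  invFun := fun x =>
    if x.1 then ⟨shiftU p x.2.1, DC_shiftU hp x.2.2⟩ else ⟨x.2.1, DC_mono x.2.2⟩
  left_inv := by
    rintro ⟨T, hT⟩
    by_cases h : (0, p) ∈ T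
    · simp only [h, dif_pos, if_pos]
      ext ⟨a, b⟩
      rw [mem_shiftU]
      constructor
      · rintro (⟨h0, h1, h2⟩ | ⟨h1, h2, h3⟩)
        · exact hT.2 _ h a b (by omega) (by omega) (by omega)
        · rw [mem_shiftD hT] at h3
          have : (a - 1 + 1, b - 1 + 1) = (a, b) := by simp; omega
          rwa [this] at h3
      · intro hab
        have hb1 : 1 ≤ b := by have := hT.1 _ hab; omega
        rcases Nat.eq_zero_or_pos a with ha | ha
        · left; have := hT.1 _ hab; subst ha; exact ⟨rfl, by omega⟩
        · right
          refine ⟨ha, hb1, ?_⟩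
          rw [mem_shiftD hT]
          have : (a - 1 + 1, b - 1 + 1) = (a, b) := by simp; omega
          rwa [this]
    · simp only [h, dif_neg, if_neg, Bool.false_eq_true, not_false_iff]
  right_inv := by
    rintro ⟨b, T, hT⟩
    by_cases hb : b
    · subst hb
      simp only [if_pos]
      have htop : (0, p) ∈ shiftU p T := by rw [mem_shiftU]; left; omega
      simp only [htop, dif_pos, Prod.mk.injEq, true_and]
      have : shiftD (shiftU p T) = T := by
        ext ⟨x, y⟩
        rw [mem_shiftD (DC_shiftU hp hT), mem_shiftU]
        constructor
        · rintro (⟨h0, _, _⟩ | ⟨_, _, h3⟩)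
          · omega
          · simpa using h3
        · intro hx; right; simp only [Nat.add_sub_cancel]; exact ⟨by omega, by omega, hx⟩
      exact Subtype.ext this
    · have hb' : b = false := by simpa using hb
      subst hb'
      simp only [Bool.false_eq_true, if_neg, not_false_iff]
      have htop : (0, p) ∉ T := fun h => by have := hT.1 _ h; omega
      simp [htop]

lemma card_base : Nat.card {T : Finset (ℕ × ℕ) // DC 1 T} = 1 := by
  have : ∀ T : Finset (ℕ × ℕ), DC 1 T → T = ∅ := by
    intro T hT
    apply Finset.eq_empty_of_forall_notMem
    intro q hq
    have := hT.1 q hq; omega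
  have e : {T : Finset (ℕ × ℕ) // DC 1 T} ≃ Unit := {
    toFun := fun _ => ()
    invFun := fun _ => ⟨∅, ⟨fun q hq => by simp at hq, fun q hq => by simp at hq⟩⟩
    left_inv := fun ⟨T, hT⟩ => Subtype.ext (this T hT).symm
    right_inv := fun _ => rfl }
  rw [Nat.card_congr e]; simp

lemma card_DC (p : ℕ) (hp : 1 ≤ p) :
    Nat.card {T : Finset (ℕ × ℕ) // DC p T} = 2 ^ (p - 1) := by
  induction p, hp using Nat.le_induction with
  | base => simpa using card_base
  | succ n hn ih =>
    rw [Nat.card_congr (stepEquiv n hn), Nat.card_prod, ih]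
    simp only [Nat.card_eq_fintype_card, Fintype.card_bool]
    rw [show n + 1 - 1 = (n - 1) + 1 by omega, pow_succ]
    ring

noncomputable def csum {p : ℕ} (v : Fin p → ℝ) : ℝ := ∑ k, v k

lemma csum_e {p : ℕ} (i : Fin p) : csum (e i) = 1 := by
  simp [csum, e]

lemma csum_add {p : ℕ} (v w : Fin p → ℝ) : csum (v + w) = csum v + csum w := by
  simp [csum, Finset.sum_add_distrib]

lemma csum_sub {p : ℕ} (v w : Fin p → ℝ) : csum (v - w) = csum v - csum w := by
  simp [csum, Finset.sum_sub_distrib]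

lemma csum_neg {p : ℕ} (v : Fin p → ℝ) : csum (-v) = -csum v := by
  simp [csum]

lemma csum_root {p : ℕ} {v : Fin p → ℝ} (h : v ∈ DeltaB p) :
    csum v = 2 ∨ csum v = 1 ∨ csum v = 0 ∨ csum v = -1 ∨ csum v = -2 := by
  rcases h with (⟨i, j, _, (rfl | rfl)⟩ | ⟨i, rfl⟩) | h
  · simp [csum_sub, csum_e]
  · norm_num [csum_add, csum_e]
  · simp [csum_e]
  · have h' : -v ∈ PosB p := h
    have : csum (-v) = 2 ∨ csum (-v) = 1 ∨ csum (-v) = 0 := by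
      rcases h' with ⟨i, j, _, (hv | hv)⟩ | ⟨i, hv⟩
      · right; right; rw [hv]; simp [csum_sub, csum_e]
      · left; rw [hv]; norm_num [csum_add, csum_e]
      · right; left; rw [hv]; simp [csum_e]
    rw [csum_neg] at this
    rcases this with h | h | h
    · right; right; right; right; linarith
    · right; right; right; left; linarith
    · right; right; left; linarith

lemma root_of_csum_two {p : ℕ} {v : Fin p → ℝ} (h : v ∈ DeltaB p) (h2 : csum v = 2) :
    ∃ a b : Fin p, a < b ∧ v = e a + e b := by
  rcases h with (⟨i, j, hij, (rfl | rfl)⟩ | ⟨i, rfl⟩) | h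
  · exfalso; rw [csum_sub, csum_e, csum_e] at h2; norm_num at h2
  · exact ⟨i, j, hij, rfl⟩
  · exfalso; rw [csum_e] at h2; norm_num at h2
  · exfalso
    have h' : -v ∈ PosB p := h
    rcases h' with ⟨i, j, _, (hv | hv)⟩ | ⟨i, hv⟩ <;>
    · have := congrArg csum hv
      rw [csum_neg] at this
      first
      | (rw [csum_sub, csum_e, csum_e] at this; linarith)
      | (rw [csum_add, csum_e, csum_e] at this; linarith)
      | (rw [csum_e] at this; linarith)

lemma e_apply {p : ℕ} (i j : Fin p) : e i j = if j = i then 1 else 0 := rfl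

/-- unordered injectivity -/
lemma pair_inj {p : ℕ} {x y a b : Fin p} (hxy : x ≠ y) (hab : a < b)
    (h : e x + e y = e a + e b) : (a = x ∧ b = y) ∨ (a = y ∧ b = x) := by
  have hyx : y ≠ x := fun hh => hxy hh.symm
  have hx := congrFun h x
  have hy := congrFun h y
  simp only [Pi.add_apply, e_apply, eq_self_iff_true, if_true, if_neg hxy, if_neg hyx] at hx hy
  by_cases hxa : x = a <;> by_cases hyb : y = b
  · exact Or.inl ⟨hxa.symm, hyb.symm⟩
  · exfalso
    by_cases hya : y = a
    · exact hxy (hxa.trans hya.symm)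
    · rw [if_neg hya, if_neg hyb] at hy; norm_num at hy
  · exfalso
    by_cases hxb : x = b
    · exact hxy (hxb.trans hyb.symm)
    · rw [if_neg hxa, if_neg hxb] at hx; norm_num at hx
  · by_cases hxb : x = b
    · by_cases hya : y = a
      · exact Or.inr ⟨hya.symm, hxb.symm⟩
      · exfalso; rw [if_neg hya, if_neg hyb] at hy; norm_num at hy
    · exfalso; rw [if_neg hxa, if_neg hxb] at hx; norm_num at hx

lemma not_double {p : ℕ} {x a b : Fin p} (hab : a < b) (h : e x + e x = e a + e b) : False := by
  have ha := congrFun h a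
  simp only [Pi.add_apply, e_apply, eq_self_iff_true, if_true, if_neg (ne_of_lt hab)] at ha
  by_cases hax : a = x
  · rw [if_pos hax] at ha; norm_num at ha
  · rw [if_neg hax] at ha; norm_num at ha

/-- The key equation analysis. -/
lemma key_eq {p : ℕ} {i j k l a b : Fin p} (hij : i < j) (hkl : k < l) (hab : a < b)
    (h : e i + e j + (e k - e l) = e a + e b) : a ≤ i ∧ b ≤ j := by
  have hl : l = i ∨ l = j := by
    by_contra hc
    push_neg at hc
    obtain ⟨hc1, hc2⟩ := hc
    have hc3 : l ≠ k := (ne_of_lt hkl).symm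
    have hx := congrFun h l
    simp [e_apply, hc1, hc2, hc3] at hx
    split_ifs at hx <;> norm_num at hx
  rcases hl with rfl | rfl
  · -- l = i
    have h2 : e k + e j = e a + e b := by rw [← h]; abel
    have hkj : k ≠ j := ne_of_lt (lt_trans hkl hij)
    rcases pair_inj hkj hab h2 with ⟨rfl, rfl⟩ | ⟨rfl, rfl⟩
    · exact ⟨le_of_lt hkl, le_refl _⟩
    · exact absurd (lt_trans (lt_trans hkl hij) hab) (lt_irrefl _)
  · -- l = j
    have h2 : e i + e k = e a + e b := by rw [← h]; abel
    by_cases hki : k = i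
    · subst hki; exact (not_double hab h2).elim
    · have hik : i ≠ k := fun hh => hki hh.symm
      rcases pair_inj hik hab h2 with ⟨rfl, rfl⟩ | ⟨rfl, rfl⟩
      · exact ⟨le_refl _, le_of_lt hkl⟩
      · exact ⟨le_of_lt hab, le_of_lt hij⟩


def Ideals (p : ℕ) : Set (Set (Fin p → ℝ)) :=
  {I | I ⊆ LongPosB p ∧ IsAbelianIdeal (DeltaB p) (PosB p) I}

section Moves

variable {p : ℕ} {I : Set (Fin p → ℝ)}

lemma move (hcl : ∀ γ ∈ I, ∀ ν ∈ PosB p, γ + ν ∈ DeltaB p → γ + ν ∈ I) {i j : Fin p} (hmem : e i + e j ∈ I) {k l a b : Fin p} (hkl : k < l)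
    (hab : a < b) (heq : e i + e j + (e k - e l) = e a + e b) : e a + e b ∈ I := by
  have hν : e k - e l ∈ PosB p := Or.inl ⟨k, l, hkl, Or.inl rfl⟩
  have hroot : e i + e j + (e k - e l) ∈ DeltaB p := by
    rw [heq]; exact Or.inl (Or.inl ⟨a, b, hab, Or.inr rfl⟩)
  have := hcl _ hmem _ hν hroot
  rwa [heq] at this

lemma moveM1 (hcl : ∀ γ ∈ I, ∀ ν ∈ PosB p, γ + ν ∈ DeltaB p → γ + ν ∈ I) {i j k : Fin p} (hij : i < j) (hmem : e i + e j ∈ I) (hki : k < i) :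
    e k + e j ∈ I :=
  move hcl hmem hki (lt_trans hki hij) (by abel)

lemma moveM2a (hcl : ∀ γ ∈ I, ∀ ν ∈ PosB p, γ + ν ∈ DeltaB p → γ + ν ∈ I) {i j l : Fin p} (hij : i < j) (hmem : e i + e j ∈ I) (hil : i < l)
    (hlj : l < j) : e i + e l ∈ I :=
  move hcl hmem hlj hil (by abel)

lemma ideal_dc (hcl : ∀ γ ∈ I, ∀ ν ∈ PosB p, γ + ν ∈ DeltaB p → γ + ν ∈ I) {i j a b : Fin p} (hij : i < j) (hmem : e i + e j ∈ I) (hab : a < b)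
    (hai : a ≤ i) (hbj : b ≤ j) : e a + e b ∈ I := by
  by_cases hbj' : b = j
  · subst hbj'
    rcases hai.lt_or_eq with ha | rfl
    · exact moveM1 hcl hij hmem ha
    · exact hmem
  · have hbj2 : b < j := lt_of_le_of_ne hbj hbj'
    by_cases hbi : i < b
    · have h1 : e i + e b ∈ I := moveM2a hcl hij hmem hbi hbj2
      rcases hai.lt_or_eq with ha | rfl
      · exact moveM1 hcl hbi h1 ha
      · exact h1
    · have hbi' : b ≤ i := le_of_not_gt hbi
      have hai' : a < i := lt_of_lt_of_le hab hbi'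
      have h1 : e a + e j ∈ I := moveM1 hcl hij hmem hai'
      exact moveM2a hcl (lt_trans hai' hij) h1 hab hbj2

lemma mem_shape (hcl : ∀ γ ∈ I, ∀ ν ∈ PosB p, γ + ν ∈ DeltaB p → γ + ν ∈ I) (hlong : I ⊆ LongPosB p) {v : Fin p → ℝ} (hv : v ∈ I) :
    ∃ i j : Fin p, i < j ∧ v = e i + e j := by
  obtain ⟨i, j, hij, hsub | hadd⟩ := hlong hv
  · exfalso
    have hν : e j ∈ PosB p := Or.inr ⟨j, rfl⟩
    have heq : v + e j = e i := by rw [hsub]; abel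
    have hroot : v + e j ∈ DeltaB p := by rw [heq]; exact Or.inl (Or.inr ⟨i, rfl⟩)
    have hmem := hcl v hv (e j) hν hroot
    rw [heq] at hmem
    obtain ⟨a, b, hab, h1 | h1⟩ := hlong hmem
    · have := congrArg csum h1
      rw [csum_e, csum_sub, csum_e, csum_e] at this; norm_num at this
    · have := congrArg csum h1
      rw [csum_e, csum_add, csum_e, csum_e] at this; norm_num at this
  · exact ⟨i, j, hij, hadd⟩

end Moves

noncomputable def toT {p : ℕ} (I : Set (Fin p → ℝ)) : Finset (ℕ × ℕ) :=
  (Finset.range p ×ˢ Finset.range p).filter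
    (fun q => ∃ i j : Fin p, q.1 = i.val ∧ q.2 = j.val ∧ i < j ∧ e i + e j ∈ I)

lemma mem_toT {p : ℕ} {I : Set (Fin p → ℝ)} {a b : ℕ} :
    (a, b) ∈ toT I ↔ ∃ i j : Fin p, a = i.val ∧ b = j.val ∧ i < j ∧ e i + e j ∈ I := by
  simp only [toT, Finset.mem_filter, Finset.mem_product, Finset.mem_range]
  constructor
  · rintro ⟨_, h⟩; exact h
  · rintro ⟨i, j, rfl, rfl, hij, hm⟩
    exact ⟨⟨i.isLt, j.isLt⟩, i, j, rfl, rfl, hij, hm⟩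

def ofT {p : ℕ} (T : Finset (ℕ × ℕ)) : Set (Fin p → ℝ) :=
  {v | ∃ i j : Fin p, i < j ∧ (i.val, j.val) ∈ T ∧ v = e i + e j}

lemma toT_DC {p : ℕ} {I : Set (Fin p → ℝ)} (hI : I ∈ Ideals p) : DC p (toT I) := by
  constructor
  · rintro ⟨a, b⟩ hq
    rw [mem_toT] at hq
    obtain ⟨i, j, rfl, rfl, hij, _⟩ := hq
    exact ⟨hij, j.isLt⟩
  · rintro ⟨x, y⟩ hq a b hab hax hby
    rw [mem_toT] at hq ⊢
    obtain ⟨i, j, rfl, rfl, hij, hm⟩ := hq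
    have hb : b < p := lt_of_le_of_lt hby j.isLt
    have ha : a < p := lt_trans hab hb
    refine ⟨⟨a, ha⟩, ⟨b, hb⟩, rfl, rfl, hab, ?_⟩
    exact ideal_dc hI.2.2.2 hij hm hab hax hby

lemma ofT_mem {p : ℕ} {T : Finset (ℕ × ℕ)} (hT : DC p T) : (ofT T : Set (Fin p → ℝ)) ∈ Ideals p := by
  refine ⟨?_, ?_, ?_, ?_⟩
  · rintro v ⟨i, j, hij, _, rfl⟩
    exact ⟨i, j, hij, Or.inr rfl⟩
  · rintro v ⟨i, j, hij, _, rfl⟩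
    exact Or.inl ⟨i, j, hij, Or.inr rfl⟩
  · rintro μ ⟨i, j, hij, _, rfl⟩ ν ⟨k, l, hkl, _, rfl⟩ hmem
    have hs : csum (e i + e j + (e k + e l)) = 4 := by
      rw [csum_add, csum_add, csum_add, csum_e, csum_e, csum_e, csum_e]; norm_num
    rcases csum_root hmem with h | h | h | h | h <;> linarith
  · rintro γ ⟨i, j, hij, hTm, rfl⟩ ν hν hroot
    rcases hν with ⟨k, l, hkl, rfl | rfl⟩ | ⟨k, rfl⟩
    · have hs : csum (e i + e j + (e k - e l)) = 2 := by
        rw [csum_add, csum_add, csum_sub, csum_e, csum_e, csum_e, csum_e]; norm_num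
      obtain ⟨a, b, hab, heq⟩ := root_of_csum_two hroot hs
      obtain ⟨hai, hbj⟩ := key_eq hij hkl hab heq
      rw [heq]
      refine ⟨a, b, hab, ?_, rfl⟩
      exact hT.2 _ hTm a.val b.val hab hai hbj
    · exfalso
      have hs : csum (e i + e j + (e k + e l)) = 4 := by
        rw [csum_add, csum_add, csum_add, csum_e, csum_e, csum_e, csum_e]; norm_num
      rcases csum_root hroot with h | h | h | h | h <;> linarith
    · exfalso
      have hs : csum (e i + e j + e k) = 3 := by
        rw [csum_add, csum_add, csum_e, csum_e, csum_e]; norm_num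
      rcases csum_root hroot with h | h | h | h | h <;> linarith

lemma toT_ofT {p : ℕ} {T : Finset (ℕ × ℕ)} (hT : DC p T) : toT (ofT T : Set (Fin p → ℝ)) = T := by
  ext ⟨a, b⟩
  rw [mem_toT]
  constructor
  · rintro ⟨i, j, rfl, rfl, hij, hm⟩
    obtain ⟨x, y, hxy, hTm, heq⟩ := hm
    rcases pair_inj (ne_of_lt hij) hxy heq with ⟨rfl, rfl⟩ | ⟨h1, h2⟩
    · exact hTm
    · rw [h1, h2] at hxy
      exact absurd hxy (not_lt_of_gt hij)
  · intro hm
    have hb := hT.1 _ hm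
    have hbp : b < p := hb.2
    have hap : a < p := lt_trans hb.1 hbp
    exact ⟨⟨a, hap⟩, ⟨b, hbp⟩, rfl, rfl, hb.1, ⟨⟨a, hap⟩, ⟨b, hbp⟩, hb.1, hm, rfl⟩⟩

lemma ofT_toT {p : ℕ} {I : Set (Fin p → ℝ)} (hI : I ∈ Ideals p) : ofT (toT I) = I := by
  ext v
  constructor
  · rintro ⟨i, j, hij, hTm, rfl⟩
    rw [mem_toT] at hTm
    obtain ⟨i', j', hi, hj, hij', hm⟩ := hTm
    have hii : i = i' := Fin.ext hi
    have hjj : j = j' := Fin.ext hj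
    rw [hii, hjj]; exact hm
  · intro hv
    obtain ⟨i, j, hij, rfl⟩ := mem_shape hI.2.2.2 hI.1 hv
    exact ⟨i, j, hij, mem_toT.mpr ⟨i, j, rfl, rfl, hij, hv⟩, rfl⟩

noncomputable def idealEquiv (p : ℕ) : (Ideals p).Elem ≃ {T : Finset (ℕ × ℕ) // DC p T} where
  toFun := fun x => ⟨toT x.1, toT_DC x.2⟩
  invFun := fun x => ⟨ofT x.1, ofT_mem x.2⟩
  left_inv := fun x => Subtype.ext (ofT_toT x.2)
  right_inv := fun x => Subtype.ext (toT_ofT x.2)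


/-- The number of long abelian ideals of `B_p` is `2^(p-1)`. -/
theorem long_abelian_ideals_Bp (p : ℕ) (hp : 2 ≤ p) :
    {I : Set (Fin p → ℝ) | I ⊆ LongPosB p ∧ IsAbelianIdeal (DeltaB p) (PosB p) I}.ncard
      = 2 ^ (p - 1) := by
  have h1 : {I : Set (Fin p → ℝ) | I ⊆ LongPosB p ∧ IsAbelianIdeal (DeltaB p) (PosB p) I}
      = Ideals p := rfl
  rw [h1, ← Nat.card_coe_set_eq, Nat.card_congr (idealEquiv p), card_DC p (by omega)]
end

section
/- For every integer p ≥ 2, let C = {x ∈ ℝ^p : x_1 > x_2 > ⋯ > x_p > 0 and x_1 + x_2 < 1} and C_s = {x ∈ ℝ^p : x_1 > x_2 > ⋯ > x_p > 0 and x_1 < 1}. Then the Lebesgue volume of C_s equals 2^(p−1) times the Lebesgue volume of C. -/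
/-!
The linear map `S x = (x₀ + x₁, 2x₁, …, 2x_{p-1})` preserves the open chamber
`x₀ > x₁ > ⋯ > x_{p-1} > 0` (as `x₀ + x₁ > 2x₁ ↔ x₀ > x₁`) and satisfies `(S x)₀ = ⟨θ, x⟩`,
so it maps `C` onto `C_s`. It is upper triangular with diagonal `(1, 2, …, 2)`, hence scales
volumes by `2^(p-1)`. We work with its inverse `y ↦ (y₀ - y₁/2, y₁/2, …, y_{p-1}/2)`, whose
preimage of `C` is `C_s`.
-/

open MeasureTheory

theorem strictAnti_and_forall_lt_iff {α : Type*} [Preorder α] {n : ℕ} {x : Fin (n + 1) → α}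
    {a : α} :
    (StrictAnti x ∧ ∀ i, a < x i) ↔
      (∀ i : Fin n, x i.succ < x i.castSucc) ∧ a < x (Fin.last n) := by
  rw [← Fin.strictAnti_iff_succ_lt]
  refine and_congr_right fun hx => ⟨fun h => h _, fun h i => h.trans_le ?_⟩
  exact hx.antitone (Fin.le_last i)

def alcove (n : ℕ) : Set (Fin (n + 2) → ℝ) :=
  {x | StrictAnti x ∧ (∀ i, 0 < x i) ∧ x 0 + x 1 < 1}

def shortAlcove (n : ℕ) : Set (Fin (n + 2) → ℝ) :=
  {x | StrictAnti x ∧ (∀ i, 0 < x i) ∧ x 0 < 1}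

noncomputable def halfShear (n : ℕ) : (Fin (n + 2) → ℝ) →ₗ[ℝ] (Fin (n + 2) → ℝ) where
  toFun y := Fin.cons (y 0 - y 1 / 2) fun i => y i.succ / 2
  map_add' y z := by
    ext i
    cases i using Fin.cases <;> simp only [Pi.add_apply, Fin.cons_zero, Fin.cons_succ] <;> ring
  map_smul' c y := by
    ext i
    cases i using Fin.cases <;>
      simp only [Pi.smul_apply, smul_eq_mul, RingHom.id_apply, Fin.cons_zero, Fin.cons_succ] <;>
      ring

section halfShear

variable {n : ℕ} (y : Fin (n + 2) → ℝ)

@[simp] theorem halfShear_apply_zero : halfShear n y 0 = y 0 - y 1 / 2 := rfl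

@[simp] theorem halfShear_apply_succ (i : Fin (n + 1)) : halfShear n y i.succ = y i.succ / 2 :=
  rfl

theorem halfShear_apply_zero_add_apply_one : halfShear n y 0 + halfShear n y 1 = y 0 := by
  simp only [halfShear_apply_zero, ← Fin.succ_zero_eq_one, halfShear_apply_succ]
  ring

theorem halfShear_apply_succ_lt_apply_castSucc_iff (i : Fin (n + 1)) :
    halfShear n y i.succ < halfShear n y i.castSucc ↔ y i.succ < y i.castSucc := by
  cases i using Fin.cases with
  | zero =>
    rw [Fin.castSucc_zero, halfShear_apply_zero, halfShear_apply_succ, Fin.succ_zero_eq_one]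
    constructor <;> intro h <;> linarith
  | succ k =>
    rw [← Fin.succ_castSucc, halfShear_apply_succ, halfShear_apply_succ]
    exact div_lt_div_iff_of_pos_right two_pos

end halfShear

theorem det_halfShear (n : ℕ) : LinearMap.det (halfShear n) = (2 ^ (n + 1))⁻¹ := by
  rw [← LinearMap.det_toMatrix', Matrix.det_of_isUpperTriangular, Fin.prod_univ_succ]
  · simp [LinearMap.toMatrix'_apply]
  · intro i j hij
    cases i using Fin.cases with
    | zero => exact absurd hij (Fin.not_lt_zero j)
    | succ k => simp [LinearMap.toMatrix'_apply, (show j < k.succ from hij).ne']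

theorem preimage_halfShear_alcove (n : ℕ) : halfShear n ⁻¹' alcove n = shortAlcove n := by
  ext y
  simp only [Set.mem_preimage, alcove, shortAlcove, Set.mem_ofPred_eq, ← and_assoc,
    strictAnti_and_forall_lt_iff, halfShear_apply_succ_lt_apply_castSucc_iff,
    halfShear_apply_zero_add_apply_one]
  rw [← Fin.succ_last, halfShear_apply_succ, div_pos_iff_of_pos_right two_pos]

/-- For the affine Weyl group of type `B_p`, the volume of the simplex `C_s` (cut out by the
short dominant root `θ_s = e₁`) is `2^(p-1)` times the volume of the fundamental alcove `C`
(cut out by the highest root `θ = e₁ + e₂`). -/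
theorem volume_Cs_eq_Bp (p : ℕ) (hp : 2 ≤ p) :
    volume {x : Fin p → ℝ | (∀ i j : Fin p, i < j → x j < x i) ∧ (∀ i, 0 < x i) ∧
        x ⟨0, by omega⟩ < 1}
      = 2 ^ (p - 1) *
        volume {x : Fin p → ℝ | (∀ i j : Fin p, i < j → x j < x i) ∧ (∀ i, 0 < x i) ∧
          x ⟨0, by omega⟩ + x ⟨1, by omega⟩ < 1} := by
  obtain ⟨n, rfl⟩ : ∃ n, p = n + 2 := ⟨p - 2, by omega⟩
  change volume (shortAlcove n) = 2 ^ (n + 1) * volume (alcove n)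
  have hdet : LinearMap.det (halfShear n) ≠ 0 := by rw [det_halfShear]; positivity
  rw [← preimage_halfShear_alcove, Measure.addHaar_preimage_linearMap volume hdet, det_halfShear,
    inv_inv, abs_of_pos (by positivity), ENNReal.ofReal_pow zero_le_two, ENNReal.ofReal_ofNat]
end

section
/- Let C = {x ∈ ℝ^4 : x_2 > x_3 > x_4 > 0, x_1 > x_2 + x_3 + x_4, and x_1 + x_2 < 1} and C_s = {x ∈ ℝ^4 : x_2 > x_3 > x_4 > 0, x_1 > x_2 + x_3 + x_4, and x_1 < 1}. Then the Lebesgue volume of C_s equals 4 times the Lebesgue volume of C. -/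
/-!
In the coordinates `tᵢ = ⟨αᵢ, x⟩` both simplices have the form `{t | 0 < t, ∑ cᵢ tᵢ < 1}`, with
`c` the coefficients of `θ = 2α₁ + 3α₂ + 4α₃ + 2α₄` for `C` and of `θ_s = α₁ + 2α₂ + 3α₃ + 2α₄`
for `C_s`. Rescaling `tᵢ` by `2, 3/2, 4/3, 1` is therefore a linear map pulling `C_s` back to `C`,
and its determinant `(2·3·4·2)/(1·2·3·2) = 4` is the ratio of the volumes.
-/

open MeasureTheory

theorem MeasureTheory.Measure.addHaar_eq_abs_det_mul_addHaar_preimage {E : Type*}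
    [NormedAddCommGroup E] [NormedSpace ℝ E] [MeasurableSpace E] [BorelSpace E]
    [FiniteDimensional ℝ E] (μ : Measure E) [μ.IsAddHaarMeasure] {f : E →ₗ[ℝ] E}
    (hf : LinearMap.det f ≠ 0) (s : Set E) :
    μ s = ENNReal.ofReal |LinearMap.det f| * μ (f ⁻¹' s) := by
  have hsurj : Function.Surjective f := (f.equivOfDetNeZero hf).surjective
  rw [← Measure.addHaar_image_linearMap, Set.image_preimage_eq s hsurj]

namespace F4

open Matrix

def alcove : Set (Fin 4 → ℝ) :=
  {x | x 2 < x 1 ∧ x 3 < x 2 ∧ 0 < x 3 ∧ x 1 + x 2 + x 3 < x 0 ∧ x 0 + x 1 < 1}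

def shortAlcove : Set (Fin 4 → ℝ) :=
  {x | x 2 < x 1 ∧ x 3 < x 2 ∧ 0 < x 3 ∧ x 1 + x 2 + x 3 < x 0 ∧ x 0 < 1}

/-- Multiplies `⟨αᵢ, x⟩` by `2, 3/2, 4/3, 1`, written in the standard basis. -/
noncomputable def rootScaling : Matrix (Fin 4) (Fin 4) ℝ :=
  !![1, 1, 0, 0; 0, 2, -1/2, -1/6; 0, 0, 3/2, -1/6; 0, 0, 0, 4/3]

theorem rootScaling_mulVec (x : Fin 4 → ℝ) :
    rootScaling *ᵥ x =
      ![x 0 + x 1, 2 * x 1 - x 2 / 2 - x 3 / 6, 3 / 2 * x 2 - x 3 / 6, 4 / 3 * x 3] := by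
  ext i
  fin_cases i <;>
    simp [rootScaling, mulVec, dotProduct, Fin.sum_univ_four] <;> ring

theorem det_rootScaling : rootScaling.det = 4 := by
  rw [det_of_isUpperTriangular]
  · simp only [rootScaling, of_apply, cons_val', cons_val_fin_one, Fin.prod_univ_four,
      cons_val_zero, cons_val_one, one_mul, cons_val]
    norm_num
  · intro i j hij
    fin_cases i <;> fin_cases j <;> simp_all [rootScaling]

theorem preimage_rootScaling_shortAlcove :
    toLin' rootScaling ⁻¹' shortAlcove = alcove := by
  ext x
  simp only [Set.mem_preimage, toLin'_apply, rootScaling_mulVec, shortAlcove, alcove,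
    Set.mem_ofPred_eq, cons_val_zero, cons_val_one, head_cons, cons_val_two, tail_cons,
    cons_val_three]
  constructor <;> rintro ⟨h₁, h₂, h₃, h₄, h₅⟩ <;>
    exact ⟨by linarith, by linarith, by linarith, by linarith, by linarith⟩

end F4

/-- For the affine Weyl group of type `F_4`, the volume of the simplex `C_s` (cut out by the
short dominant root `θ_s = e₁`) is `4` times the volume of the fundamental alcove `C`
(cut out by the highest root `θ = e₁ + e₂`). -/
theorem volume_Cs_eq_F4 :
    volume {x : Fin 4 → ℝ | x 2 < x 1 ∧ x 3 < x 2 ∧ 0 < x 3 ∧ x 1 + x 2 + x 3 < x 0 ∧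
        x 0 < 1}
      = 4 *
        volume {x : Fin 4 → ℝ | x 2 < x 1 ∧ x 3 < x 2 ∧ 0 < x 3 ∧ x 1 + x 2 + x 3 < x 0 ∧
          x 0 + x 1 < 1} := by
  have hdet : LinearMap.det (Matrix.toLin' F4.rootScaling) = 4 := by
    rw [LinearMap.det_toLin', F4.det_rootScaling]
  have key := Measure.addHaar_eq_abs_det_mul_addHaar_preimage volume
    (hdet ▸ four_ne_zero) F4.shortAlcove
  rwa [F4.preimage_rootScaling_shortAlcove, hdet, abs_of_pos four_pos, ENNReal.ofReal_ofNat] at key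
end

section
/- For every integer p ≥ 2, the set M = {e_i + e_j : 1 ≤ i < j ≤ p} is a combinatorial abelian ideal of B_p consisting of long roots, and every combinatorial abelian ideal of B_p consisting only of long roots is contained in M. -/
/-- Coordinate sum. -/
noncomputable def S {p : ℕ} (v : Fin p → ℝ) : ℝ := ∑ i, v i

lemma S_e {p : ℕ} (i : Fin p) : S (e i) = 1 := by
  simp [S, e]

lemma S_add {p : ℕ} (v w : Fin p → ℝ) : S (v + w) = S v + S w := by
  simp [S, Finset.sum_add_distrib]

lemma S_sub {p : ℕ} (v w : Fin p → ℝ) : S (v - w) = S v - S w := by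
  simp [S, Finset.sum_sub_distrib]

lemma S_neg {p : ℕ} (v : Fin p → ℝ) : S (-v) = -S v := by
  simp [S]

lemma S_pos_cases {p : ℕ} {v : Fin p → ℝ} (h : v ∈ PosB p) :
    S v = 0 ∨ S v = 1 ∨ S v = 2 := by
  rcases h with ⟨i, j, _, h | h⟩ | ⟨i, h⟩
  · left; rw [h, S_sub, S_e, S_e]; ring
  · right; right; rw [h, S_add, S_e, S_e]; ring
  · right; left; rw [h, S_e]

lemma S_delta_le {p : ℕ} {v : Fin p → ℝ} (h : v ∈ DeltaB p) : S v ≤ 2 := by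
  rcases h with h | h
  · rcases S_pos_cases h with h' | h' | h' <;> linarith
  · rcases S_pos_cases h with h' | h' | h' <;> rw [S_neg] at h' <;> linarith

lemma delta_sum_two {p : ℕ} {v : Fin p → ℝ} (h : v ∈ DeltaB p) (hs : S v = 2) :
    ∃ i j : Fin p, i < j ∧ v = e i + e j := by
  rcases h with h | h
  · rcases h with ⟨i, j, hij, h | h⟩ | ⟨i, h⟩
    · exfalso; rw [h, S_sub, S_e, S_e] at hs; linarith
    · exact ⟨i, j, hij, h⟩
    · exfalso; rw [h, S_e] at hs; linarith
  · exfalso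
    rcases S_pos_cases h with h' | h' | h' <;> rw [S_neg, hs] at h' <;> linarith

lemma e_not_long {p : ℕ} (i : Fin p) : e i ∉ LongPosB p := by
  rintro ⟨a, b, _, h | h⟩
  · have := congrArg S h
    rw [S_e, S_sub, S_e, S_e] at this; linarith
  · have := congrArg S h
    rw [S_e, S_add, S_e, S_e] at this; linarith

/-- `M = {e_i + e_j : i < j}` is a long combinatorial abelian ideal of `B_p`, and every
combinatorial abelian ideal of `B_p` consisting only of long roots is contained in `M`. -/
theorem maximal_long_abelian_ideal_Bp (p : ℕ) (hp : 2 ≤ p) :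
    (IsAbelianIdeal (DeltaB p) (PosB p) {v : Fin p → ℝ | ∃ i j : Fin p, i < j ∧ v = e i + e j} ∧
      {v : Fin p → ℝ | ∃ i j : Fin p, i < j ∧ v = e i + e j} ⊆ LongPosB p) ∧
    ∀ I : Set (Fin p → ℝ), IsAbelianIdeal (DeltaB p) (PosB p) I → I ⊆ LongPosB p →
      I ⊆ {v : Fin p → ℝ | ∃ i j : Fin p, i < j ∧ v = e i + e j} := by
  refine ⟨⟨⟨?_, ?_, ?_⟩, ?_⟩, ?_⟩
  · rintro v ⟨i, j, hij, hv⟩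
    exact Or.inl ⟨i, j, hij, Or.inr hv⟩
  · rintro μ ⟨i, j, _, hμ⟩ ν ⟨k, l, _, hν⟩ hΔ
    have := S_delta_le hΔ
    rw [S_add, hμ, hν, S_add, S_add, S_e, S_e, S_e, S_e] at this
    linarith
  · rintro γ ⟨i, j, hij, hγ⟩ ν hν hΔ
    have h1 := S_delta_le hΔ
    have h2 : S γ = 2 := by rw [hγ, S_add, S_e, S_e]; ring
    rw [S_add, h2] at h1
    rcases S_pos_cases hν with h' | h' | h' <;>
      [skip; linarith; linarith]
    exact delta_sum_two hΔ (by rw [S_add, h2, h']; ring)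
  · rintro v ⟨i, j, hij, hv⟩
    exact ⟨i, j, hij, Or.inr hv⟩
  · rintro I ⟨_, _, hideal⟩ hlong v hv
    rcases hlong hv with ⟨i, j, hij, hv' | hv'⟩
    · exfalso
      have hej : e j ∈ PosB p := Or.inr ⟨j, rfl⟩
      have hsum : v + e j = e i := by rw [hv']; abel
      have hΔ : v + e j ∈ DeltaB p := by
        rw [hsum]; exact Or.inl (Or.inr ⟨i, rfl⟩)
      have : v + e j ∈ I := hideal v hv (e j) hej hΔ
      rw [hsum] at this
      exact e_not_long i (hlong this)
    · exact ⟨i, j, hij, hv'⟩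
end
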